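/- arXiv:2601.09321 — 2 statements merged into one kernel-verified Lean document; each statement's English description precedes it below -/
import Mathlib

section
/- For all natural numbers m ≥ 2 and n ≥ 2 and every serialization π of the m×n grid (a bijection from cells to Fin (m·n)), there exists a cell p whose set of grid-adjacent cells is not equal to the preimage under π of the sequential neighborhood of π(p). In other words, no bijective flattening of a two-dimensional grid (with both sides at least 2) maps the visual neighborhood of every cell exactly onto the set of sequentially adjacent indices. -/
/-!
The cell serialized first has a visual neighbor in each of the two directions (both sides of the
grid are at least 2), and these are distinct cells; but index `0` has only one sequential neighbor,
so the injective `π` cannot send both of them to it.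
-/

/-- Two cells of the `m × n` grid are grid-adjacent (visual neighbors) if they
differ by exactly 1 in exactly one coordinate. -/
def gridAdj {m n : ℕ} (p q : Fin m × Fin n) : Prop :=
  Nat.dist p.1.val q.1.val + Nat.dist p.2.val q.2.val = 1

/-- Two indices of `Fin N` are sequentially adjacent if they differ by exactly 1. -/
def seqAdj {N : ℕ} (i j : Fin N) : Prop :=
  Nat.dist i.val j.val = 1

theorem Fin.exists_dist_eq_one {k : ℕ} (hk : 1 < k) (r : Fin k) :
    ∃ r' : Fin k, Nat.dist r r' = 1 := by
  by_cases hr : r.val + 1 < k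
  · exact ⟨⟨r + 1, hr⟩, by simp [Nat.dist]⟩
  · exact ⟨⟨r - 1, by omega⟩, by simp only [Nat.dist]; omega⟩

theorem exists_gridAdj_ne {m n : ℕ} (hm : 1 < m) (hn : 1 < n) (p : Fin m × Fin n) :
    ∃ q q', q ≠ q' ∧ gridAdj p q ∧ gridAdj p q' := by
  obtain ⟨r, hr⟩ := Fin.exists_dist_eq_one hm p.1
  obtain ⟨c, hc⟩ := Fin.exists_dist_eq_one hn p.2
  refine ⟨(r, p.2), (p.1, c), fun h => ?_, ?_, ?_⟩
  · rw [Prod.mk.injEq] at h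
    rw [← h.2, Nat.dist_self] at hc
    exact zero_ne_one hc
  · simp [gridAdj, hr]
  · simp [gridAdj, hc]

theorem seqAdj_eq_of_val_eq_zero {N : ℕ} {i j j' : Fin N} (hi : i.val = 0)
    (hj : seqAdj i j) (hj' : seqAdj i j') : j = j' := by
  simp only [seqAdj, Nat.dist, hi] at hj hj'
  omega

/-- For every serialization of an `m × n` grid with `m, n ≥ 2`, some cell's set of
visual neighbors differs from the preimage of the sequential neighborhood of its index. -/
theorem no_serialization_preserves_all_neighborhoods
    (m n : ℕ) (hm : 2 ≤ m) (hn : 2 ≤ n)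
    (π : (Fin m × Fin n) ≃ Fin (m * n)) :
    ∃ p : Fin m × Fin n,
      {q : Fin m × Fin n | gridAdj p q} ≠ ⇑π ⁻¹' {j : Fin (m * n) | seqAdj (π p) j} := by
  by_contra! h
  let p := π.symm ⟨0, Nat.mul_pos (by omega) (by omega)⟩
  have hp : (π p).val = 0 := by simp [p]
  have hadj : ∀ q, gridAdj p q → seqAdj (π p) (π q) := fun q hq =>
    (Set.ext_iff.mp (h p) q).mp hq
  obtain ⟨q, q', hne, hq, hq'⟩ := exists_gridAdj_ne hm hn p
  exact hne (π.injective (seqAdj_eq_of_val_eq_zero hp (hadj q hq) (hadj q' hq')))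
end

section
/- For all natural numbers m ≥ 3 and n ≥ 3, for every serialization π of the m×n grid, and for every interior cell p (a cell (r,c) with 0 < r < m−1 and 0 < c < n−1), the set of grid-adjacent cells of p is not equal to the preimage under π of the sequential neighborhood of π(p): the former has cardinality 4 while the latter has cardinality at most 2. -/
/-- An interior cell of the `m × n` grid. -/
def IsInterior {m n : ℕ} (p : Fin m × Fin n) : Prop :=
  0 < p.1.val ∧ p.1.val < m - 1 ∧ 0 < p.2.val ∧ p.2.val < n - 1

theorem ncard_setOf_seqAdj_le_two {N : ℕ} (i : Fin N) : {j : Fin N | seqAdj i j}.ncard ≤ 2 := by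
  have hmaps : Set.MapsTo (fun j : Fin N ↦ (j : ℤ) - i) {j | seqAdj i j} {-1, 1} := by
    intro j hj
    simp only [Set.mem_ofPred, seqAdj, Nat.dist] at hj
    simp only [Set.mem_insert_iff, Set.mem_singleton_iff]
    omega
  have hinj : Set.InjOn (fun j : Fin N ↦ (j : ℤ) - i) {j | seqAdj i j} := by
    intro a _ b _ hab
    simpa [Fin.ext_iff] using hab
  calc {j : Fin N | seqAdj i j}.ncard ≤ ({-1, 1} : Set ℤ).ncard :=
        Set.ncard_le_ncard_of_injOn _ hmaps hinj
    _ = 2 := Set.ncard_pair (by norm_num)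

theorem ncard_setOf_gridAdj_of_isInterior {m n : ℕ} {p : Fin m × Fin n} (hp : IsInterior p) :
    {q | gridAdj p q}.ncard = 4 := by
  obtain ⟨⟨r, hr⟩, ⟨c, hc⟩⟩ := p
  obtain ⟨hr₀, hr₁, hc₀, hc₁⟩ : 0 < r ∧ r < m - 1 ∧ 0 < c ∧ c < n - 1 := hp
  refine Set.ncard_eq_four.mpr ⟨(⟨r - 1, by omega⟩, ⟨c, hc⟩), (⟨r + 1, by omega⟩, ⟨c, hc⟩),
    (⟨r, hr⟩, ⟨c - 1, by omega⟩), (⟨r, hr⟩, ⟨c + 1, by omega⟩), ?_, ?_, ?_, ?_, ?_, ?_, ?_⟩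
  iterate 6 · simp only [ne_eq, Prod.mk.injEq, Fin.mk.injEq]; omega
  ext ⟨⟨x, hx⟩, ⟨y, hy⟩⟩
  simp only [Set.mem_ofPred, gridAdj, Nat.dist, Set.mem_insert_iff, Set.mem_singleton_iff,
    Prod.mk.injEq, Fin.mk.injEq]
  omega

theorem interior_neighborhood_mismatch_general
    (m n : ℕ)
    (π : (Fin m × Fin n) ≃ Fin (m * n))
    (p : Fin m × Fin n) (hp : IsInterior p) :
    {q : Fin m × Fin n | gridAdj p q} ≠ ⇑π ⁻¹' {j : Fin (m * n) | seqAdj (π p) j} ∧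
    {q : Fin m × Fin n | gridAdj p q}.ncard = 4 ∧
    (⇑π ⁻¹' {j : Fin (m * n) | seqAdj (π p) j}).ncard ≤ 2 := by
  have hgrid := ncard_setOf_gridAdj_of_isInterior hp
  have hseq : (⇑π ⁻¹' {j : Fin (m * n) | seqAdj (π p) j}).ncard ≤ 2 := by
    rw [Set.ncard_preimage_of_injective_subset_range π.injective (by simp)]
    exact ncard_setOf_seqAdj_le_two _
  refine ⟨fun h ↦ ?_, hgrid, hseq⟩
  rw [← h, hgrid] at hseq
  omega

/-- For `m, n ≥ 3`, every serialization, and every interior cell `p`, the set of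
grid neighbors of `p` differs from the preimage of the sequential neighborhood of
`π p`: the former has cardinality `4`, the latter at most `2`. -/
theorem interior_neighborhood_mismatch
    (m n : ℕ) (hm : 3 ≤ m) (hn : 3 ≤ n)
    (π : (Fin m × Fin n) ≃ Fin (m * n))
    (p : Fin m × Fin n) (hp : IsInterior p) :
    {q : Fin m × Fin n | gridAdj p q} ≠ ⇑π ⁻¹' {j : Fin (m * n) | seqAdj (π p) j} ∧
    {q : Fin m × Fin n | gridAdj p q}.ncard = 4 ∧
    (⇑π ⁻¹' {j : Fin (m * n) | seqAdj (π p) j}).ncard ≤ 2 :=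
  interior_neighborhood_mismatch_general m n π p hp
end
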